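/- arXiv:2410.01961 — 9 statements merged into one kernel-verified Lean document; each statement's English description precedes it below -/
import Mathlib

section
/- Let A and B be n×n matrices over a field F and let D be an n×n diagonal matrix such that A+D and B+D are invertible. Then A and B are principal minor equivalent if and only if (A+D)^{-1} and (B+D)^{-1} are principal minor equivalent. -/
/-!
Jacobi's identity `det M⁻¹[S,S] * det M = det M[Sᶜ,Sᶜ]` carries principal minor equivalence of
invertible matrices over to their inverses, the minor at `S = univ` giving `det M = det N`.
Expanding `det (A + diagonal d)[S,S]` multilinearly in the rows gives
`∑_{T ⊆ S} det A[T,T] * ∏_{i ∈ S \ T} d i`, so a common diagonal shift preserves principal minor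
equivalence, and shifting back by `-d` reflects it.
-/

open Matrix

/-- Principal minor equivalence: all corresponding principal minors agree. -/
def PrincipalMinorEquiv {F : Type*} [Field F] {m : Type*} [Fintype m] [DecidableEq m]
    (A B : Matrix m m F) : Prop :=
  ∀ S : Finset m,
    (A.submatrix (fun i : S => (i : m)) (fun i : S => (i : m))).det =
    (B.submatrix (fun i : S => (i : m)) (fun i : S => (i : m))).det

open Finset

namespace Matrix

variable {R : Type*} [CommRing R] {m : Type*} [DecidableEq m]

abbrev principalMinor (A : Matrix m m R) (S : Finset m) : R :=
  (A.submatrix ((↑) : S → m) (↑)).det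

theorem principalMinor_submatrix_val (A : Matrix m m R) (S : Finset m) (T : Finset S) :
    (A.submatrix ((↑) : S → m) (↑)).principalMinor T =
      A.principalMinor (T.map (Function.Embedding.subtype _)) := by
  unfold principalMinor
  rw [submatrix_submatrix, ← det_submatrix_equiv_self (T.equivMap (Function.Embedding.subtype _)),
    submatrix_submatrix]
  rfl

section Fintype

variable [Fintype m]

theorem principalMinor_univ (A : Matrix m m R) : A.principalMinor univ = A.det :=
  det_submatrix_equiv_self (Equiv.subtypeUnivEquiv mem_univ) A

theorem det_mul_det_toBlocks₁₁_of_mul_eq_one {k l : Type*} [Fintype k] [DecidableEq k]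
    [Fintype l] [DecidableEq l] {M N : Matrix (k ⊕ l) (k ⊕ l) R} (h : M * N = 1) :
    M.det * N.toBlocks₁₁.det = M.toBlocks₂₂.det := by
  rw [← fromBlocks_toBlocks M, ← fromBlocks_toBlocks N, fromBlocks_multiply,
    ← fromBlocks_one] at h
  obtain ⟨h₁₁, -, h₂₁, -⟩ := fromBlocks_inj.mp h
  have hcol : M * fromBlocks N.toBlocks₁₁ 0 N.toBlocks₂₁ 1 =
      fromBlocks 1 M.toBlocks₁₂ 0 M.toBlocks₂₂ := by
    conv_lhs => rw [← fromBlocks_toBlocks M]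
    rw [fromBlocks_multiply, h₁₁, h₂₁]
    simp
  simpa using congrArg det hcol

theorem principalMinor_inv_mul_det (M : Matrix m m R) (hM : IsUnit M.det) (S : Finset m) :
    M⁻¹.principalMinor S * M.det = M.principalMinor Sᶜ := by
  let e := Equiv.sumCompl (· ∈ S)
  have h := det_mul_det_toBlocks₁₁_of_mul_eq_one (M := M.submatrix e e) (N := M⁻¹.submatrix e e)
    (by rw [submatrix_mul_equiv, mul_nonsing_inv _ hM, submatrix_one_equiv])
  rw [det_submatrix_equiv_self, mul_comm] at h
  unfold principalMinor
  rw [← det_submatrix_equiv_self (Equiv.subtypeEquivRight fun _ => mem_compl.symm :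
    {a // a ∉ S} ≃ ↥Sᶜ)]
  exact h

theorem det_of_piecewise_single (A : Matrix m m R) (d : m → R) (T : Finset m) :
    det (of (T.piecewise A fun i => Pi.single i (d i))) = A.principalMinor T * ∏ i ∈ Tᶜ, d i := by
  have h : of (T.piecewise A fun i => Pi.single i (d i)) =
      of fun i j =>
        T.piecewise (1 : m → R) d i * of (T.piecewise A.row (1 : Matrix m m R).row) i j := by
    ext i j
    by_cases hi : i ∈ T <;> simp [Finset.piecewise, hi, one_apply, Pi.single_apply, eq_comm]
  rw [h, det_mul_column, det_piecewise_one_eq_submatrix_det, prod_piecewise]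
  simp [mul_comm, compl_eq_univ_sdiff]

theorem det_add_diagonal (A : Matrix m m R) (d : m → R) :
    (A + diagonal d).det = ∑ T : Finset m, A.principalMinor T * ∏ i ∈ Tᶜ, d i := by
  have hrows : A + diagonal d = of ((fun i => A i) + fun i => Pi.single i (d i)) := by
    ext i j
    by_cases h : i = j <;> simp [h, eq_comm]
  rw [hrows]
  exact (detRowAlternating.map_add_univ _ _).trans
    (sum_congr rfl fun T _ => det_of_piecewise_single A d T)

end Fintype

theorem principalMinor_add_diagonal (A : Matrix m m R) (d : m → R) (S : Finset m) :
    (A + diagonal d).principalMinor S = ∑ T : Finset S,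
      A.principalMinor (T.map (Function.Embedding.subtype _)) * ∏ i ∈ Tᶜ, d i := by
  have h : (A + diagonal d).submatrix ((↑) : S → m) (↑) =
      A.submatrix (↑) (↑) + diagonal (d ∘ (↑)) := by
    rw [← submatrix_diagonal _ _ Subtype.val_injective]
    rfl
  rw [principalMinor, h, det_add_diagonal]
  simp only [principalMinor_submatrix_val, Function.comp_apply]

end Matrix

section PrincipalMinorEquiv

variable {F : Type*} [Field F] {m : Type*} [Fintype m] [DecidableEq m]

theorem PrincipalMinorEquiv.add_diagonal {A B : Matrix m m F} (h : PrincipalMinorEquiv A B)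
    (d : m → F) : PrincipalMinorEquiv (A + diagonal d) (B + diagonal d) := fun S => by
  show (A + diagonal d).principalMinor S = (B + diagonal d).principalMinor S
  simp only [principalMinor_add_diagonal, h _]

theorem principalMinorEquiv_add_diagonal_iff {A B : Matrix m m F} (d : m → F) :
    PrincipalMinorEquiv (A + diagonal d) (B + diagonal d) ↔ PrincipalMinorEquiv A B :=
  ⟨fun h => by simpa only [← diagonal_neg, add_neg_cancel_right] using h.add_diagonal (-d ·),
    fun h => h.add_diagonal d⟩

theorem PrincipalMinorEquiv.inv {M N : Matrix m m F} (hM : IsUnit M.det) (hN : IsUnit N.det)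
    (h : PrincipalMinorEquiv M N) : PrincipalMinorEquiv M⁻¹ N⁻¹ := fun S => by
  have hdet : M.det = N.det := by simpa only [principalMinor_univ] using h univ
  apply mul_right_cancel₀ hN.ne_zero
  calc M⁻¹.principalMinor S * N.det = M.principalMinor Sᶜ := by
        rw [← hdet, principalMinor_inv_mul_det M hM]
    _ = N.principalMinor Sᶜ := h Sᶜ
    _ = N⁻¹.principalMinor S * N.det := (principalMinor_inv_mul_det N hN S).symm

theorem principalMinorEquiv_inv_iff {M N : Matrix m m F} (hM : IsUnit M.det)
    (hN : IsUnit N.det) : PrincipalMinorEquiv M⁻¹ N⁻¹ ↔ PrincipalMinorEquiv M N :=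
  ⟨fun h => by
    simpa only [nonsing_inv_nonsing_inv _ hM, nonsing_inv_nonsing_inv _ hN] using
      h.inv (isUnit_nonsing_inv_det _ hM) (isUnit_nonsing_inv_det _ hN),
    fun h => h.inv hM hN⟩

end PrincipalMinorEquiv

theorem pme_iff_pme_inverse {n : ℕ} {F : Type*} [Field F]
    (A B : Matrix (Fin n) (Fin n) F) (d : Fin n → F)
    (hA : IsUnit (A + Matrix.diagonal d).det)
    (hB : IsUnit (B + Matrix.diagonal d).det) :
    PrincipalMinorEquiv A B ↔
      PrincipalMinorEquiv (A + Matrix.diagonal d)⁻¹ (B + Matrix.diagonal d)⁻¹ := by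
  rw [principalMinorEquiv_inv_iff hA hB, principalMinorEquiv_add_diagonal_iff]
end

section
/- Let A be an n×n irreducible matrix over a field with a cut X ⊆ [n], so that A[X,X̄] = p·qᵀ and A[X̄,X] = u·vᵀ for column vectors p,v of dimension |X| and q,u of dimension |X̄| (with X̄ the complement of X). Let tw(A,X) be the matrix with blocks tw(A,X)[X,X] = A[X,X], tw(A,X)[X,X̄] = p·uᵀ, tw(A,X)[X̄,X] = q·vᵀ, and tw(A,X)[X̄,X̄] = A[X̄,X̄]ᵀ. Then A and tw(A,X) are principal minor equivalent: det(A[S,S]) = det(tw(A,X)[S,S]) for every S ⊆ [n]. -/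
open Matrix

/-- `X` is a cut of `A`: `2 ≤ |X|`, `|X| ≤ n - 2`, and both off-diagonal blocks
`A[X, X̄]`, `A[X̄, X]` have rank at most one. -/
def IsCut {F : Type*} [Field F] {m : Type*} [Fintype m] [DecidableEq m]
    (A : Matrix m m F) (X : Finset m) : Prop :=
  2 ≤ X.card ∧ X.card + 2 ≤ Fintype.card m ∧
  (A.submatrix (fun i : X => (i : m)) (fun j : (Xᶜ : Finset m) => (j : m))).rank ≤ 1 ∧
  (A.submatrix (fun i : (Xᶜ : Finset m) => (i : m)) (fun j : X => (j : m))).rank ≤ 1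

/-- The cut-transpose of `A` with respect to the cut `X`, given rank-one
factorizations `A[X,X̄] = p·qᵀ` and `A[X̄,X] = u·vᵀ`. -/
def cutTranspose {F : Type*} [Field F] {n : ℕ} (A : Matrix (Fin n) (Fin n) F)
    (X : Finset (Fin n)) (p v q u : Fin n → F) : Matrix (Fin n) (Fin n) F :=
  fun i j =>
    if i ∈ X then (if j ∈ X then A i j else p i * u j)
    else (if j ∈ X then q i * v j else A j i)

/-- `A` is irreducible: the directed graph with an edge `(i,j)` whenever `i ≠ j`
and `A i j ≠ 0` is strongly connected. -/
def MatrixIrreducible {F : Type*} [Field F] {n : ℕ} (A : Matrix (Fin n) (Fin n) F) : Prop :=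
  ∀ i j : Fin n, Relation.ReflTransGen (fun a b => a ≠ b ∧ A a b ≠ 0) i j

/-! After ordering the indices of `S` as `S ∩ X` followed by `S \ X`, the two principal minors are
the determinants of `[[B, p qᵀ], [u vᵀ, D]]` and `[[B, p uᵀ], [q vᵀ, Dᵀ]]`. Their Schur complements
with respect to `B` are `det B • D - c • u qᵀ` and its transpose, with the same scalar
`c = vᵀ (adj B) p`. In the adjugate form `det B ^ k * det M = det B * det (det B • D - C (adj B) Q)`
of the Schur complement formula this only needs `det B` to be regular; the general case follows by
replacing `B` with `X • 1 + B` over `R[X]`, whose determinant is monic, and evaluating at `X = 0`. -/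

namespace Matrix

theorem vecMulVec_mul_mul_vecMulVec {R m n : Type*} [CommSemiring R] [Fintype m] (u : n → R)
    (v : m → R) (M : Matrix m m R) (p : m → R) (q : n → R) :
    vecMulVec u v * M * vecMulVec p q = (v ᵥ* M ⬝ᵥ p) • vecMulVec u q := by
  rw [vecMulVec_mul, vecMulVec_mul_vecMulVec]
  ext i j
  simp [vecMulVec_apply, mul_left_comm]

theorem submatrix_sumElim {R ι α β : Type*} (M : Matrix ι ι R) (a : α → ι) (b : β → ι) :
    M.submatrix (Sum.elim a b) (Sum.elim a b) =
      fromBlocks (M.submatrix a a) (M.submatrix a b) (M.submatrix b a) (M.submatrix b b) := by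
  ext (i | i) (j | j) <;> rfl

variable {R : Type*} [CommRing R] {m n : Type*} [Fintype m] [Fintype n] [DecidableEq m]
  [DecidableEq n]

theorem det_pow_mul_det_fromBlocks (A : Matrix m m R) (B : Matrix m n R) (C : Matrix n m R)
    (D : Matrix n n R) :
    A.det ^ Fintype.card n * (fromBlocks A B C D).det =
      A.det * (A.det • D - C * adjugate A * B).det := by
  have hmul : fromBlocks 1 0 (-(C * adjugate A)) (A.det • 1) * fromBlocks A B C D =
      fromBlocks A B 0 (A.det • D - C * adjugate A * B) := by
    rw [fromBlocks_multiply]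
    congr 1 <;> simp [Matrix.mul_assoc, adjugate_mul, sub_eq_neg_add]
  have := congrArg det hmul
  rwa [det_mul, det_fromBlocks_zero₁₂, det_fromBlocks_zero₂₁, det_one, one_mul, det_smul,
    det_one, mul_one] at this

theorem det_fromBlocks_vecMulVec_eq_transpose_of_isLeftRegular {A : Matrix m m R}
    (hA : IsLeftRegular A.det) (D : Matrix n n R) (p v : m → R) (q u : n → R) :
    (fromBlocks A (vecMulVec p q) (vecMulVec u v) D).det =
      (fromBlocks A (vecMulVec p u) (vecMulVec q v) Dᵀ).det := by
  apply hA.pow (Fintype.card n)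
  simp only [det_pow_mul_det_fromBlocks, vecMulVec_mul_mul_vecMulVec]
  rw [← det_transpose (_ - _)]
  simp

open Polynomial in
theorem det_fromBlocks_vecMulVec_eq_transpose (A : Matrix m m R) (D : Matrix n n R)
    (p v : m → R) (q u : n → R) :
    (fromBlocks A (vecMulVec p q) (vecMulVec u v) D).det =
      (fromBlocks A (vecMulVec p u) (vecMulVec q v) Dᵀ).det := by
  have hreg : IsLeftRegular (det ((X : R[X]) • (1 : Matrix m m R[X]) + A.map C)) :=
    (Monic.isRegular (leadingCoeff_det_X_one_add_C A)).left
  have h := congrArg (evalRingHom 0) <|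
    det_fromBlocks_vecMulVec_eq_transpose_of_isLeftRegular hreg (D.map C) (C ∘ p) (C ∘ v)
      (C ∘ q) (C ∘ u)
  simp only [RingHom.map_det] at h
  convert h using 2 <;> ext (i | i) (j | j) <;> simp [vecMulVec_apply, one_apply, apply_ite]

end Matrix

theorem submatrix_sumElim_eq_fromBlocks_vecMulVec {R ι α β : Type*} [Mul R]
    (A : Matrix ι ι R) (X : Finset ι) (p v q u : ι → R)
    (hpq : ∀ i ∈ X, ∀ j ∉ X, A i j = p i * q j) (huv : ∀ i ∉ X, ∀ j ∈ X, A i j = u i * v j)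
    {a : α → ι} {b : β → ι} (ha : ∀ i, a i ∈ X) (hb : ∀ j, b j ∉ X) :
    A.submatrix (Sum.elim a b) (Sum.elim a b) =
      fromBlocks (A.submatrix a a) (vecMulVec (p ∘ a) (q ∘ b)) (vecMulVec (u ∘ b) (v ∘ a))
        (A.submatrix b b) := by
  rw [submatrix_sumElim]
  congr 1 <;> ext i j
  · exact hpq _ (ha i) _ (hb j)
  · exact huv _ (hb i) _ (ha j)

theorem cutTranspose_submatrix_sumElim {F : Type*} [Field F] {n : ℕ}
    (A : Matrix (Fin n) (Fin n) F) (X : Finset (Fin n)) (p v q u : Fin n → F) {α β : Type*}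
    {a : α → Fin n} {b : β → Fin n} (ha : ∀ i, a i ∈ X) (hb : ∀ j, b j ∉ X) :
    (cutTranspose A X p v q u).submatrix (Sum.elim a b) (Sum.elim a b) =
      fromBlocks (A.submatrix a a) (vecMulVec (p ∘ a) (u ∘ b)) (vecMulVec (q ∘ b) (v ∘ a))
        (A.submatrix b b)ᵀ := by
  ext (i | i) (j | j) <;> simp [cutTranspose, ha, hb, vecMulVec_apply]

theorem cutTranspose_pme_general {n : ℕ} {F : Type*} [Field F]
    (A : Matrix (Fin n) (Fin n) F)
    (X : Finset (Fin n)) (p v q u : Fin n → F)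
    (hpq : ∀ i ∈ X, ∀ j ∉ X, A i j = p i * q j)
    (huv : ∀ i ∉ X, ∀ j ∈ X, A i j = u i * v j) :
    PrincipalMinorEquiv A (cutTranspose A X p v q u) := by
  intro S
  classical
  let e := Equiv.sumCompl fun i : S => (i : Fin n) ∈ X
  have he : ((↑) : S → Fin n) ∘ e = Sum.elim (fun i => i.1.1) (fun i => i.1.1) := by
    ext (i | i) <;> rfl
  rw [← det_submatrix_equiv_self e, ← det_submatrix_equiv_self e, submatrix_submatrix,
    submatrix_submatrix, he,
    submatrix_sumElim_eq_fromBlocks_vecMulVec A X p v q u hpq huv (fun i => i.2) (fun i => i.2),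
    cutTranspose_submatrix_sumElim A X p v q u (fun i => i.2) (fun i => i.2)]
  exact det_fromBlocks_vecMulVec_eq_transpose ..

theorem cutTranspose_pme {n : ℕ} {F : Type*} [Field F]
    (A : Matrix (Fin n) (Fin n) F) (hirr : MatrixIrreducible A)
    (X : Finset (Fin n)) (hX : IsCut A X) (p v q u : Fin n → F)
    (hpq : ∀ i ∈ X, ∀ j ∉ X, A i j = p i * q j)
    (huv : ∀ i ∉ X, ∀ j ∈ X, A i j = u i * v j) :
    PrincipalMinorEquiv A (cutTranspose A X p v q u) :=
  cutTranspose_pme_general A X p v q u hpq huv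
end

section
/- Let A be an n×n matrix over a field, X a cut of A with rank-one factorizations A[X,X̄] = p·qᵀ and A[X̄,X] = u·vᵀ as in the definition of cut-transpose, where q is the first nonzero row of A[X,X̄] and u is the first nonzero column of A[X̄,X]. Then applying the cut-transpose twice returns the original matrix: tw(tw(A,X), X) = A. -/
open Matrix

/-- Applying the cut-transpose twice (with the canonical choice of rank-one
factorizations, where `q` is the first nonzero row of `A[X,X̄]` and `u` is the
first nonzero column of `A[X̄,X]`) returns the original matrix. -/
theorem cutTranspose_involutive {n : ℕ} {F : Type*} [Field F]
    (A : Matrix (Fin n) (Fin n) F) (X : Finset (Fin n)) (hX : IsCut A X)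
    (p v q u : Fin n → F)
    (hpq : ∀ i ∈ X, ∀ j ∉ X, A i j = p i * q j)
    (huv : ∀ i ∉ X, ∀ j ∈ X, A i j = u i * v j)
    -- `q` is the first nonzero row of `A[X,X̄]`:
    (hq : ∃ i₀ ∈ X, (∀ j ∉ X, A i₀ j = q j) ∧
      (∀ i ∈ X, i < i₀ → ∀ j ∉ X, A i j = 0) ∧ ∃ j ∉ X, q j ≠ 0)
    -- `u` is the first nonzero column of `A[X̄,X]`:
    (hu : ∃ j₀ ∈ X, (∀ i ∉ X, A i j₀ = u i) ∧
      (∀ j ∈ X, j < j₀ → ∀ i ∉ X, A i j = 0) ∧ ∃ i ∉ X, u i ≠ 0) :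
    cutTranspose (cutTranspose A X p v q u) X p v u q = A := by
  funext i j
  by_cases hi : i ∈ X <;> by_cases hj : j ∈ X
  · simp [cutTranspose, hi, hj]
  · simp [cutTranspose, hi, hj, hpq i hi j hj]
  · simp [cutTranspose, hi, hj, huv i hi j hj]
  · simp [cutTranspose, hi, hj]
end

section
/- Let A be an n×n matrix over a field with all off-diagonal entries nonzero, and let S be a cut of A. For any T ⊆ [n] such that T ⊆ S, T is a cut of A if and only if T is a cut of tw(A,S). -/
open Matrix

/-!
For `i ∈ S` the rows of `tw(A,S)` and `A` agree on `S` and differ on `S̄` by the column scaling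
`A i j = p i * q j ↦ p i * u j`; symmetrically its columns indexed by `S` are a row scaling of those
of `A`. Since all off-diagonal entries of `A` are nonzero, so are the `q j` and `u j` with `j ∉ S`,
hence both scalings are invertible. For `T ⊆ S` the block `[T, T̄]` lies in rows `S` and the block
`[T̄, T]` in columns `S`, so neither block changes rank.
-/

section RankScaling

variable {R : Type*} [CommRing R] {m k : Type*}

theorem Matrix.rank_eq_of_eq_mul_col_scale [Fintype k] [DecidableEq k] {M N : Matrix m k R}
    (c : k → R) (hc : ∀ j, IsUnit (c j)) (h : ∀ i j, N i j = M i j * c j) : N.rank = M.rank := by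
  have hN : N = M * diagonal c := by
    ext i j
    rw [mul_diagonal, h]
  rw [hN, rank_mul_eq_left_of_isUnit_det _ _ (by rwa [det_diagonal, IsUnit.prod_univ_iff])]

theorem Matrix.rank_eq_of_eq_row_scale_mul [Fintype m] [DecidableEq m] [Fintype k]
    {M N : Matrix m k R} (d : m → R) (hd : ∀ i, IsUnit (d i)) (h : ∀ i j, N i j = d i * M i j) :
    N.rank = M.rank := by
  have hN : N = diagonal d * M := by
    ext i j
    rw [diagonal_mul, h]
  rw [hN, rank_mul_eq_right_of_isUnit_det _ _ (by rwa [det_diagonal, IsUnit.prod_univ_iff])]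

end RankScaling

section CutTranspose

variable {n : ℕ} {F : Type*} [Field F] {A : Matrix (Fin n) (Fin n) F} {S : Finset (Fin n)}
  {p v q u : Fin n → F}

theorem right_factor_ne_zero (hoff : ∀ i j : Fin n, i ≠ j → A i j ≠ 0)
    (hpq : ∀ i ∈ S, ∀ j ∉ S, A i j = p i * q j) {i j : Fin n} (hi : i ∈ S) (hj : j ∉ S) :
    q j ≠ 0 :=
  right_ne_zero_of_mul (hpq i hi j hj ▸ hoff i j (ne_of_mem_of_not_mem hi hj))

theorem left_factor_ne_zero (hoff : ∀ i j : Fin n, i ≠ j → A i j ≠ 0)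
    (huv : ∀ i ∉ S, ∀ j ∈ S, A i j = u i * v j) {i j : Fin n} (hi : i ∉ S) (hj : j ∈ S) :
    u i ≠ 0 :=
  left_ne_zero_of_mul (huv i hi j hj ▸ hoff i j (ne_of_mem_of_not_mem hj hi).symm)

theorem exists_cutTranspose_eq_mul_col_scale (hpq : ∀ i ∈ S, ∀ j ∉ S, A i j = p i * q j)
    (hq : ∀ j ∉ S, q j ≠ 0) (hu : ∀ j ∉ S, u j ≠ 0) :
    ∃ c : Fin n → F, (∀ j, IsUnit (c j)) ∧
      ∀ i ∈ S, ∀ j, cutTranspose A S p v q u i j = A i j * c j := by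
  refine ⟨fun j => if j ∈ S then 1 else u j / q j, fun j => ?_, fun i hi j => ?_⟩
  · dsimp only
    split_ifs with hj
    · exact isUnit_one
    · exact isUnit_iff_ne_zero.mpr (div_ne_zero (hu j hj) (hq j hj))
  · by_cases hj : j ∈ S
    · simp [cutTranspose, hi, hj]
    · simp only [cutTranspose, hi, hj, if_true, if_false, hpq i hi j hj]
      field_simp [hq j hj]

theorem exists_cutTranspose_eq_row_scale_mul (huv : ∀ i ∉ S, ∀ j ∈ S, A i j = u i * v j)
    (hq : ∀ i ∉ S, q i ≠ 0) (hu : ∀ i ∉ S, u i ≠ 0) :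
    ∃ d : Fin n → F, (∀ i, IsUnit (d i)) ∧
      ∀ i, ∀ j ∈ S, cutTranspose A S p v q u i j = d i * A i j := by
  refine ⟨fun i => if i ∈ S then 1 else q i / u i, fun i => ?_, fun i j hj => ?_⟩
  · dsimp only
    split_ifs with hi
    · exact isUnit_one
    · exact isUnit_iff_ne_zero.mpr (div_ne_zero (hq i hi) (hu i hi))
  · by_cases hi : i ∈ S
    · simp [cutTranspose, hi, hj]
    · simp only [cutTranspose, hi, hj, if_true, if_false, huv i hi j hj]
      field_simp [hu i hi]

end CutTranspose

theorem cut_subset_iff_cut_of_cutTranspose {n : ℕ} {F : Type*} [Field F]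
    (A : Matrix (Fin n) (Fin n) F)
    (hoff : ∀ i j : Fin n, i ≠ j → A i j ≠ 0)
    (S : Finset (Fin n)) (hS : IsCut A S) (p v q u : Fin n → F)
    (hpq : ∀ i ∈ S, ∀ j ∉ S, A i j = p i * q j)
    (huv : ∀ i ∉ S, ∀ j ∈ S, A i j = u i * v j)
    (T : Finset (Fin n)) (hT : T ⊆ S) :
    IsCut A T ↔ IsCut (cutTranspose A S p v q u) T := by
  obtain ⟨i₀, hi₀⟩ : S.Nonempty := Finset.card_pos.mp (by have := hS.1; omega)
  have hq : ∀ j ∉ S, q j ≠ 0 := fun j hj => right_factor_ne_zero hoff hpq hi₀ hj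
  have hu : ∀ j ∉ S, u j ≠ 0 := fun j hj => left_factor_ne_zero hoff huv hj hi₀
  obtain ⟨c, hc, hBc⟩ := exists_cutTranspose_eq_mul_col_scale (v := v) hpq hq hu
  obtain ⟨d, hd, hBd⟩ := exists_cutTranspose_eq_row_scale_mul (p := p) huv hq hu
  have hTTc : ((cutTranspose A S p v q u).submatrix (fun i : T => (i : Fin n))
        (fun j : (Tᶜ : Finset (Fin n)) => (j : Fin n))).rank =
      (A.submatrix (fun i : T => (i : Fin n)) (fun j : (Tᶜ : Finset (Fin n)) => (j : Fin n))).rank :=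
    rank_eq_of_eq_mul_col_scale (c ∘ (↑)) (fun j => hc j) fun i j => hBc i (hT i.2) j
  have hTcT : ((cutTranspose A S p v q u).submatrix (fun i : (Tᶜ : Finset (Fin n)) => (i : Fin n))
        (fun j : T => (j : Fin n))).rank =
      (A.submatrix (fun i : (Tᶜ : Finset (Fin n)) => (i : Fin n)) (fun j : T => (j : Fin n))).rank :=
    rank_eq_of_eq_row_scale_mul (d ∘ (↑)) (fun i => hd i) fun i j => hBd i j (hT j.2)
  rw [IsCut, IsCut, hTTc, hTcT]
end

section
/- Let A be an n×n matrix over a field with all off-diagonal entries nonzero, and let S be a cut of A. For any T ⊆ [n] such that neither T nor its complement is contained in S or in the complement of S, T is a cut of A if and only if the symmetric difference T Δ S is a cut of tw(A,S). -/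
open Matrix

/-!
Split `[n]` into the four regions `T ∩ S`, `T \ S`, `S \ T`, `(T ∪ S)ᶜ`, all nonempty. A
factorization `A[T̄,T] = U·Vᵀ` overlaps `A[S,S̄] = p·qᵀ` on `(S \ T) × (T \ S)` and
`A[S̄,S] = u·vᵀ` on `(T ∪ S)ᶜ × (T ∩ S)`; these entries are nonzero, so the factorizations agree
there up to scalars. Hence every entry of `tw(A,S)[T Δ S, (T Δ S)ᶜ]` is a product of `U`, `q`, `v`
and two constants, which is a rank-one factorization; replacing `T` by `Tᶜ` handles the other block.
The converse is the same statement for `tw(A,S)`, whose cut-transpose at `S` is `A` again.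
-/

theorem Matrix.rank_le_one_iff {F α β : Type*} [Field F] [Fintype β] (M : Matrix α β F) :
    M.rank ≤ 1 ↔ ∃ (w : α → F) (v : β → F), M = vecMulVec w v := by
  classical
  refine ⟨fun h => ?_, fun ⟨w, v, hM⟩ => hM ▸ rank_vecMulVec_le w v⟩
  obtain ⟨w, hw⟩ := finrank_le_one_iff.1 h
  choose c hc using fun j => hw ⟨M.col j, Pi.single j 1, by ext; simp⟩
  refine ⟨w, c, ?_⟩
  ext i j
  have := congrArg (fun x : LinearMap.range M.mulVecLin => (x : α → F) i) (hc j)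
  simp only [SetLike.val_smul, Pi.smul_apply, smul_eq_mul, col_apply] at this
  rw [vecMulVec_apply, ← this, mul_comm]

section Blocks

variable {F α β : Type*} [Field F]

def BlockRankLeOne (M : Matrix α β F) (X : Finset α) (Y : Finset β) : Prop :=
  ∃ (f : α → F) (g : β → F), ∀ i ∈ X, ∀ j ∈ Y, M i j = f i * g j

theorem rank_submatrix_le_one_iff (M : Matrix α β F) (X : Finset α) (Y : Finset β) :
    (M.submatrix (fun i : X => (i : α)) (fun j : Y => (j : β))).rank ≤ 1 ↔
      BlockRankLeOne M X Y := by
  classical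
  rw [Matrix.rank_le_one_iff]
  constructor
  · rintro ⟨w, v, h⟩
    refine ⟨fun i => if hi : i ∈ X then w ⟨i, hi⟩ else 0,
      fun j => if hj : j ∈ Y then v ⟨j, hj⟩ else 0, fun i hi j hj => ?_⟩
    simpa [hi, hj, vecMulVec_apply] using congrFun₂ h ⟨i, hi⟩ ⟨j, hj⟩
  · rintro ⟨f, g, h⟩
    exact ⟨fun i => f i, fun j => g j, by ext i j; exact h i i.2 j j.2⟩

theorem isCut_iff {m : Type*} [Fintype m] [DecidableEq m] (A : Matrix m m F) (X : Finset m) :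
    IsCut A X ↔ 2 ≤ X.card ∧ X.card + 2 ≤ Fintype.card m ∧
      BlockRankLeOne A X Xᶜ ∧ BlockRankLeOne A Xᶜ X := by
  simp only [IsCut, rank_submatrix_le_one_iff]

theorem exists_scale_of_mul_eq_mul {f f' : α → F} {g g' : β → F} {X : Finset α} {Y : Finset β}
    (hX : X.Nonempty) (hY : Y.Nonempty) (h : ∀ i ∈ X, ∀ j ∈ Y, f i * g j = f' i * g' j)
    (hne : ∀ i ∈ X, ∀ j ∈ Y, f i * g j ≠ 0) :
    ∃ e : F, (∀ i ∈ X, f' i = e * f i) ∧ ∀ j ∈ Y, g j = e * g' j := by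
  obtain ⟨i₀, hi₀⟩ := hX
  obtain ⟨j₀, hj₀⟩ := hY
  have hg' : g' j₀ ≠ 0 := right_ne_zero_of_mul (h i₀ hi₀ j₀ hj₀ ▸ hne i₀ hi₀ j₀ hj₀)
  have hf' : ∀ i ∈ X, f' i = g j₀ / g' j₀ * f i := fun i hi => by
    field_simp
    linear_combination (h i hi j₀ hj₀).symm
  refine ⟨g j₀ / g' j₀, hf', fun j hj => ?_⟩
  have hf : f i₀ ≠ 0 := left_ne_zero_of_mul (hne i₀ hi₀ j₀ hj₀)
  refine mul_left_cancel₀ hf ?_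
  rw [h i₀ hi₀ j hj, hf' i₀ hi₀]
  ring

end Blocks

section Crossing

variable {m : Type*} [Fintype m] [DecidableEq m]

def Crosses (T S : Finset m) : Prop :=
  (T ∩ S).Nonempty ∧ (T \ S).Nonempty ∧ (S \ T).Nonempty ∧ (Tᶜ \ S).Nonempty

theorem crosses_of_not_subset {T S : Finset m} (h₁ : ¬ T ⊆ S) (h₂ : ¬ T ⊆ Sᶜ) (h₃ : ¬ Tᶜ ⊆ S)
    (h₄ : ¬ Tᶜ ⊆ Sᶜ) : Crosses T S := by
  simp only [Finset.not_subset, Finset.mem_compl] at h₁ h₂ h₃ h₄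
  simp only [Crosses, Finset.Nonempty, Finset.mem_inter, Finset.mem_sdiff, Finset.mem_compl]
  grind

theorem Crosses.compl_left {T S : Finset m} (h : Crosses T S) : Crosses Tᶜ S := by
  obtain ⟨h₁, h₂, h₃, h₄⟩ := h
  simp only [Crosses, Finset.Nonempty, Finset.mem_inter, Finset.mem_sdiff, Finset.mem_compl] at *
  grind

theorem Crosses.symmDiff_left {T S : Finset m} (h : Crosses T S) : Crosses (symmDiff T S) S := by
  obtain ⟨h₁, h₂, h₃, h₄⟩ := h
  simp only [Crosses, Finset.Nonempty, Finset.mem_inter, Finset.mem_sdiff, Finset.mem_compl,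
    Finset.mem_symmDiff] at *
  grind

theorem Crosses.two_le_card {T S : Finset m} (h : Crosses T S) : 2 ≤ T.card := by
  obtain ⟨⟨a, ha⟩, ⟨b, hb⟩, -, -⟩ := h
  rw [Finset.mem_inter] at ha
  rw [Finset.mem_sdiff] at hb
  exact Finset.one_lt_card.2 ⟨a, ha.1, b, hb.1, by rintro rfl; exact hb.2 ha.2⟩

theorem Crosses.card_add_two_le {T S : Finset m} (h : Crosses T S) :
    T.card + 2 ≤ Fintype.card m := by
  have := h.compl_left.two_le_card
  rw [Finset.card_compl] at this
  have := T.card_le_univ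
  omega

end Crossing

section CutTranspose

variable {F : Type*} [Field F] {n : ℕ} {A : Matrix (Fin n) (Fin n) F} {S T : Finset (Fin n)}
  {p v q u : Fin n → F}

theorem cutTranspose_cutTranspose (hpq : ∀ i ∈ S, ∀ j ∉ S, A i j = p i * q j)
    (huv : ∀ i ∉ S, ∀ j ∈ S, A i j = u i * v j) :
    cutTranspose (cutTranspose A S p v q u) S p v u q = A := by
  ext i j
  by_cases hi : i ∈ S <;> by_cases hj : j ∈ S <;> simp [cutTranspose, hi, hj, hpq, huv]

theorem cutTranspose_ne_zero (hoff : ∀ i j : Fin n, i ≠ j → A i j ≠ 0)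
    (hpq : ∀ i ∈ S, ∀ j ∉ S, A i j = p i * q j) (huv : ∀ i ∉ S, ∀ j ∈ S, A i j = u i * v j)
    (hS : S.Nonempty) (hSc : Sᶜ.Nonempty) :
    ∀ i j : Fin n, i ≠ j → cutTranspose A S p v q u i j ≠ 0 := by
  intro i j hij
  obtain ⟨s, hs⟩ := hS
  obtain ⟨t, ht⟩ := hSc
  rw [Finset.mem_compl] at ht
  have hpq₀ : ∀ i ∈ S, ∀ j ∉ S, p i * q j ≠ 0 := fun i hi j hj =>
    hpq i hi j hj ▸ hoff i j (by rintro rfl; exact hj hi)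
  have huv₀ : ∀ i ∉ S, ∀ j ∈ S, u i * v j ≠ 0 := fun i hi j hj =>
    huv i hi j hj ▸ hoff i j (by rintro rfl; exact hi hj)
  by_cases hi : i ∈ S <;> by_cases hj : j ∈ S <;>
    simp only [cutTranspose, hi, hj, if_true, if_false]
  · exact hoff i j hij
  · exact mul_ne_zero (left_ne_zero_of_mul (hpq₀ i hi t ht))
      (left_ne_zero_of_mul (huv₀ j hj s hs))
  · exact mul_ne_zero (right_ne_zero_of_mul (hpq₀ s hs i hi))
      (right_ne_zero_of_mul (huv₀ t ht j hj))
  · exact hoff j i hij.symm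

theorem blockRankLeOne_cutTranspose_symmDiff (hoff : ∀ i j : Fin n, i ≠ j → A i j ≠ 0)
    (hpq : ∀ i ∈ S, ∀ j ∉ S, A i j = p i * q j) (huv : ∀ i ∉ S, ∀ j ∈ S, A i j = u i * v j)
    (hT : Crosses T S) (hA : BlockRankLeOne A Tᶜ T) :
    BlockRankLeOne (cutTranspose A S p v q u) (symmDiff T S) (symmDiff T S)ᶜ := by
  obtain ⟨U, V, hUV⟩ := hA
  obtain ⟨hTS, hT_S, hS_T, hTS_c⟩ := hT
  have hne : ∀ i ∈ Tᶜ, ∀ j ∈ T, U i * V j ≠ 0 := fun i hi j hj =>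
    hUV i hi j hj ▸ hoff i j (by rintro rfl; exact Finset.mem_compl.1 hi hj)
  obtain ⟨e, hpU, hVq⟩ := exists_scale_of_mul_eq_mul (f' := p) (g' := q) hS_T hT_S
    (fun i hi j hj => by
      simp only [Finset.mem_sdiff] at hi hj
      rw [← hUV i (Finset.mem_compl.2 hi.2) j hj.1, hpq i hi.1 j hj.2])
    (fun i hi j hj => by
      simp only [Finset.mem_sdiff] at hi hj
      exact hne i (Finset.mem_compl.2 hi.2) j hj.1)
  obtain ⟨e', huU, hVv⟩ := exists_scale_of_mul_eq_mul (f' := u) (g' := v) hTS_c hTS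
    (fun i hi j hj => by
      simp only [Finset.mem_sdiff, Finset.mem_inter] at hi hj
      rw [← hUV i hi.1 j hj.1, huv i hi.2 j hj.2])
    (fun i hi j hj => by
      simp only [Finset.mem_sdiff, Finset.mem_inter] at hi hj
      exact hne i hi.1 j hj.1)
  -- Rows in `S \ T` scale like `U` and rows in `T \ S` like `q`; columns in `T ∩ S` scale like
  -- `v` and columns outside `T ∪ S` like `U`.
  refine ⟨fun i => if i ∈ S then e' * U i else q i, fun j => if j ∈ S then v j else e * U j, ?_⟩
  intro i hi j hj
  simp only [Finset.mem_compl, Finset.mem_symmDiff] at hi hj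
  have hiT : i ∈ T ↔ i ∉ S := by tauto
  have hjT : j ∈ T ↔ j ∈ S := by tauto
  by_cases hiS : i ∈ S <;> by_cases hjS : j ∈ S <;>
    simp only [cutTranspose, hiS, hjS, if_true, if_false]
  · rw [hUV i (Finset.mem_compl.2 (by tauto)) j (hjT.2 hjS),
      hVv j (Finset.mem_inter.2 ⟨hjT.2 hjS, hjS⟩)]
    ring
  · rw [hpU i (Finset.mem_sdiff.2 ⟨hiS, by tauto⟩),
      huU j (Finset.mem_sdiff.2 ⟨Finset.mem_compl.2 (by tauto), hjS⟩)]
    ring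
  · rw [hUV j (Finset.mem_compl.2 (by tauto)) i (hiT.2 hiS),
      hVq i (Finset.mem_sdiff.2 ⟨hiT.2 hiS, hiS⟩)]
    ring

theorem IsCut.cutTranspose_symmDiff (hoff : ∀ i j : Fin n, i ≠ j → A i j ≠ 0)
    (hpq : ∀ i ∈ S, ∀ j ∉ S, A i j = p i * q j) (huv : ∀ i ∉ S, ∀ j ∈ S, A i j = u i * v j)
    (hT : Crosses T S) (h : IsCut A T) : IsCut (cutTranspose A S p v q u) (symmDiff T S) := by
  rw [isCut_iff] at h ⊢
  obtain ⟨-, -, hTTc, hTcT⟩ := h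
  have hTc := blockRankLeOne_cutTranspose_symmDiff (p := p) (v := v) hoff hpq huv hT.compl_left
    (by rw [compl_compl]; exact hTTc)
  have hcompl : symmDiff Tᶜ S = (symmDiff T S)ᶜ := by
    ext
    simp only [Finset.mem_symmDiff, Finset.mem_compl]
    tauto
  rw [hcompl, compl_compl] at hTc
  exact ⟨hT.symmDiff_left.two_le_card, hT.symmDiff_left.card_add_two_le,
    blockRankLeOne_cutTranspose_symmDiff hoff hpq huv hT hTcT, hTc⟩

end CutTranspose

theorem cut_symmDiff_iff_cut_of_cutTranspose_general {n : ℕ} {F : Type*} [Field F]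
    (A : Matrix (Fin n) (Fin n) F)
    (hoff : ∀ i j : Fin n, i ≠ j → A i j ≠ 0)
    (S : Finset (Fin n)) (p v q u : Fin n → F)
    (hpq : ∀ i ∈ S, ∀ j ∉ S, A i j = p i * q j)
    (huv : ∀ i ∉ S, ∀ j ∈ S, A i j = u i * v j)
    (T : Finset (Fin n))
    (h1 : ¬ T ⊆ S) (h2 : ¬ T ⊆ Sᶜ) (h3 : ¬ Tᶜ ⊆ S) (h4 : ¬ Tᶜ ⊆ Sᶜ) :
    IsCut A T ↔ IsCut (cutTranspose A S p v q u) (symmDiff T S) := by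
  have hT := crosses_of_not_subset h1 h2 h3 h4
  refine ⟨IsCut.cutTranspose_symmDiff hoff hpq huv hT, fun h => ?_⟩
  have hS : S.Nonempty := hT.1.mono Finset.inter_subset_right
  have hSc : Sᶜ.Nonempty :=
    hT.2.1.mono fun i hi => Finset.mem_compl.2 (Finset.mem_sdiff.1 hi).2
  -- `tw(A,S)` factors as `p·uᵀ` and `q·vᵀ` across `S`, and transposing it back gives `A`.
  have hBack := IsCut.cutTranspose_symmDiff (p := p) (v := v) (q := u) (u := q)
    (cutTranspose_ne_zero hoff hpq huv hS hSc)
    (fun i hi j hj => by simp [cutTranspose, hi, hj])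
    (fun i hi j hj => by simp [cutTranspose, hi, hj]) hT.symmDiff_left h
  rwa [cutTranspose_cutTranspose hpq huv, symmDiff_symmDiff_cancel_right] at hBack

theorem cut_symmDiff_iff_cut_of_cutTranspose {n : ℕ} {F : Type*} [Field F]
    (A : Matrix (Fin n) (Fin n) F)
    (hoff : ∀ i j : Fin n, i ≠ j → A i j ≠ 0)
    (S : Finset (Fin n)) (hS : IsCut A S) (p v q u : Fin n → F)
    (hpq : ∀ i ∈ S, ∀ j ∉ S, A i j = p i * q j)
    (huv : ∀ i ∉ S, ∀ j ∈ S, A i j = u i * v j)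
    (T : Finset (Fin n))
    (h1 : ¬ T ⊆ S) (h2 : ¬ T ⊆ Sᶜ) (h3 : ¬ Tᶜ ⊆ S) (h4 : ¬ Tᶜ ⊆ Sᶜ) :
    IsCut A T ↔ IsCut (cutTranspose A S p v q u) (symmDiff T S) :=
  cut_symmDiff_iff_cut_of_cutTranspose_general A hoff S p v q u hpq huv T h1 h2 h3 h4
end

section
/- Let A be an n×n matrix over a field with all off-diagonal entries nonzero. Let S be a minimal cut of A with |S| ≥ 3, and let t ∈ S̄ be any index outside S. Then the principal submatrix A[S∪{t}] has no cut. -/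
open Matrix

lemma rank_le_one_of_cols {F : Type*} [Field F] {I J : Type*} [Fintype I] [Fintype J]
    (M : Matrix I J F) (c : I → F)
    (h : ∀ j, ∃ a : F, ∀ i, M i j = a * c i) : M.rank ≤ 1 := by
  choose a ha using h
  have hle : LinearMap.range M.mulVecLin ≤ Submodule.span F {c} := by
    rintro - ⟨v, rfl⟩
    have : M.mulVecLin v = (∑ j, a j * v j) • c := by
      ext i
      simp only [mulVecLin_apply, Matrix.mulVec, dotProduct, Pi.smul_apply, smul_eq_mul,
        Finset.sum_mul]
      exact Finset.sum_congr rfl fun j _ => by rw [ha j i]; ring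
    rw [this]
    exact Submodule.smul_mem _ _ (Submodule.mem_span_singleton_self c)
  calc M.rank ≤ Module.finrank F (Submodule.span F ({c} : Set (I → F))) :=
        Submodule.finrank_mono hle
    _ ≤ 1 := by
        refine (finrank_span_le_card _).trans ?_
        simp

lemma cols_of_rank_le_one {F : Type*} [Field F] {I J : Type*} [Fintype I] [Fintype J]
    [DecidableEq J] (M : Matrix I J F) (hr : M.rank ≤ 1) (j₀ : J) (hc : ∃ i, M i j₀ ≠ 0) :
    ∀ j, ∃ a : F, ∀ i, M i j = a * M i j₀ := by
  set c0 : I → F := fun i => M i j₀ with hc0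
  have hc0ne : c0 ≠ 0 := by
    obtain ⟨i, hi⟩ := hc
    intro h; exact hi (congrFun h i)
  have hmem : ∀ j, (fun i => M i j) ∈ LinearMap.range M.mulVecLin := by
    intro j
    exact ⟨Pi.single j 1, by ext i; simp⟩
  have hle : Submodule.span F {c0} ≤ LinearMap.range M.mulVecLin := by
    rw [Submodule.span_singleton_le_iff_mem]; exact hmem j₀
  have heq : Submodule.span F ({c0} : Set (I → F)) = LinearMap.range M.mulVecLin := by
    apply Submodule.eq_of_le_of_finrank_le hle
    rw [finrank_span_singleton hc0ne]
    exact hr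
  intro j
  have : (fun i => M i j) ∈ Submodule.span F ({c0} : Set (I → F)) := heq ▸ hmem j
  obtain ⟨a, ha⟩ := Submodule.mem_span_singleton.mp this
  exact ⟨a, fun i => (congrFun ha i).symm⟩

lemma rank_le_one_of_rows {F : Type*} [Field F] {I J : Type*} [Fintype I] [Fintype J]
    (M : Matrix I J F) (r : J → F)
    (h : ∀ i, ∃ a : F, ∀ j, M i j = a * r j) : M.rank ≤ 1 := by
  rw [← M.rank_transpose]
  exact rank_le_one_of_cols Mᵀ r h

lemma rows_of_rank_le_one {F : Type*} [Field F] {I J : Type*} [Fintype I] [Fintype J]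
    [DecidableEq I] (M : Matrix I J F) (hr : M.rank ≤ 1) (i₀ : I) (hc : ∃ j, M i₀ j ≠ 0) :
    ∀ i, ∃ a : F, ∀ j, M i j = a * M i₀ j := by
  rw [← M.rank_transpose] at hr
  exact cols_of_rank_le_one Mᵀ hr i₀ hc

lemma key {n : ℕ} {F : Type*} [Field F] (A : Matrix (Fin n) (Fin n) F)
    (hoff : ∀ i j : Fin n, i ≠ j → A i j ≠ 0)
    (S : Finset (Fin n)) (hS : IsCut A S) (t : Fin n) (ht : t ∉ S)
    (Y : Finset (Fin n)) (hYS : Y ⊆ S) (hY2 : 2 ≤ Y.card) (hYlt : Y.card < S.card)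
    (hcol : ∀ j ∈ insert t S, j ∉ Y → ∃ a : F, ∀ i ∈ Y, A i j = a * A i t)
    (hrow : ∀ i ∈ insert t S, i ∉ Y → ∃ a : F, ∀ j ∈ Y, A i j = a * A t j) :
    IsCut A Y := by
  unfold IsCut at hS ⊢
  obtain ⟨hS1, hS2, hSc, hSr⟩ := hS
  -- a point of S
  obtain ⟨s, hs⟩ : S.Nonempty := Finset.card_pos.mp (by omega)
  have hst : s ≠ t := fun h => ht (h ▸ hs)
  have htS : t ∈ (Sᶜ : Finset (Fin n)) := Finset.mem_compl.mpr ht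
  -- column facts from hS
  have hScol := cols_of_rank_le_one _ hSc (⟨t, htS⟩ : (Sᶜ : Finset (Fin n)))
    ⟨(⟨s, hs⟩ : (S : Finset (Fin n))), hoff s t hst⟩
  have hSrow := rows_of_rank_le_one _ hSr (⟨t, htS⟩ : (Sᶜ : Finset (Fin n)))
    ⟨(⟨s, hs⟩ : (S : Finset (Fin n))), hoff t s (Ne.symm hst)⟩
  have hScard : S.card + 1 ≤ n := by
    have := Finset.card_le_univ (insert t S)
    rw [Finset.card_insert_of_notMem ht] at this
    simpa using this
  refine ⟨hY2, ?_, ?_, ?_⟩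
  · rw [Fintype.card_fin]; omega
  · refine rank_le_one_of_cols _ (fun i : (Y : Finset (Fin n)) => A i t) ?_
    intro j
    have hj : (j : Fin n) ∉ Y := Finset.mem_compl.mp j.2
    by_cases hjT : (j : Fin n) ∈ insert t S
    · obtain ⟨a, ha⟩ := hcol j hjT hj
      exact ⟨a, fun i => ha i i.2⟩
    · have hjS : (j : Fin n) ∈ (Sᶜ : Finset (Fin n)) :=
        Finset.mem_compl.mpr (fun h => hjT (Finset.mem_insert_of_mem h))
      obtain ⟨a, ha⟩ := hScol ⟨j, hjS⟩
      exact ⟨a, fun i => ha ⟨i, hYS i.2⟩⟩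
  · refine rank_le_one_of_rows _ (fun j : (Y : Finset (Fin n)) => A t j) ?_
    intro i
    have hi : (i : Fin n) ∉ Y := Finset.mem_compl.mp i.2
    by_cases hiT : (i : Fin n) ∈ insert t S
    · obtain ⟨a, ha⟩ := hrow i hiT hi
      exact ⟨a, fun j => ha j j.2⟩
    · have hiS : (i : Fin n) ∈ (Sᶜ : Finset (Fin n)) :=
        Finset.mem_compl.mpr (fun h => hiT (Finset.mem_insert_of_mem h))
      obtain ⟨a, ha⟩ := hSrow ⟨i, hiS⟩
      exact ⟨a, fun j => ha ⟨j, hYS j.2⟩⟩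


lemma main_aux {n : ℕ} {F : Type*} [Field F]
    (A : Matrix (Fin n) (Fin n) F)
    (hoff : ∀ i j : Fin n, i ≠ j → A i j ≠ 0)
    (S : Finset (Fin n)) (hS : IsCut A S)
    (hmin : ∀ S' : Finset (Fin n), S' ⊂ S → ¬ IsCut A S')
    (hcard : 3 ≤ S.card) (t : Fin n) (ht : t ∉ S)
    (T : Finset (Fin n)) (hT : T = insert t S)
    (X : Finset (T : Finset (Fin n)))
    (hX : IsCut (A.submatrix (fun i : (T : Finset (Fin n)) => (i : Fin n))
        (fun i : (T : Finset (Fin n)) => (i : Fin n))) X) : False := by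
  have httT : t ∈ T := hT ▸ Finset.mem_insert_self t S
  set tt : (T : Finset (Fin n)) := ⟨t, httT⟩ with htt
  have hcardT : Fintype.card ((T : Finset (Fin n)) : Type) = S.card + 1 := by
    rw [Fintype.card_coe, hT, Finset.card_insert_of_notMem ht]
  unfold IsCut at hX
  obtain ⟨hX2, hXm, hXc, hXr⟩ := hX
  obtain ⟨Z, hz1, hz2, hz3, hcolZ, hrowZ⟩ :
      ∃ Z : Finset ((T : Finset (Fin n)) : Type), tt ∉ Z ∧ 2 ≤ Z.card ∧
        Z.card + 2 ≤ Fintype.card ((T : Finset (Fin n)) : Type) ∧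
        (∀ j : (T : Finset (Fin n)), j ∉ Z → ∃ a : F, ∀ i : (T : Finset (Fin n)), i ∈ Z →
          A i j = a * A i t) ∧
        (∀ i : (T : Finset (Fin n)), i ∉ Z → ∃ a : F, ∀ j : (T : Finset (Fin n)), j ∈ Z →
          A i j = a * A t j) := by
    by_cases htX : tt ∈ X
    · -- use Z = Xᶜ
      refine ⟨Xᶜ, by simp [htX], ?_, ?_, ?_, ?_⟩
      · rw [Finset.card_compl]; omega
      · rw [Finset.card_compl]; omega
      · intro j hj
        have hjX : j ∈ X := by simpa using hj
        obtain ⟨x, hx⟩ : ∃ x, x ∈ Xᶜ := Finset.card_pos.mp (by rw [Finset.card_compl]; omega)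
        have hxt : (x : Fin n) ≠ t := fun h => (by simpa using hx : x ∉ X)
          (by rwa [show x = tt from Subtype.ext h])
        have hc := cols_of_rank_le_one _ hXr (⟨tt, htX⟩ : (X : Finset _))
          ⟨(⟨x, hx⟩ : ((Xᶜ : Finset _) : Type)), hoff _ t hxt⟩
        obtain ⟨a, ha⟩ := hc ⟨j, hjX⟩
        exact ⟨a, fun i hi => ha ⟨i, hi⟩⟩
      · intro i hi
        have hiX : i ∈ X := by simpa using hi
        obtain ⟨x, hx⟩ : ∃ x, x ∈ Xᶜ := Finset.card_pos.mp (by rw [Finset.card_compl]; omega)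
        have hxt : (x : Fin n) ≠ t := fun h => (by simpa using hx : x ∉ X)
          (by rwa [show x = tt from Subtype.ext h])
        have hr := rows_of_rank_le_one _ hXc (⟨tt, htX⟩ : (X : Finset _))
          ⟨(⟨x, hx⟩ : ((Xᶜ : Finset _) : Type)), hoff t _ (Ne.symm hxt)⟩
        obtain ⟨a, ha⟩ := hr ⟨i, hiX⟩
        exact ⟨a, fun j hj => ha ⟨j, hj⟩⟩
    · -- use Z = X
      refine ⟨X, htX, hX2, hXm, ?_, ?_⟩
      · intro j hj
        have hjX : j ∈ Xᶜ := Finset.mem_compl.mpr hj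
        obtain ⟨x, hx⟩ : ∃ x, x ∈ X := Finset.card_pos.mp (by omega)
        have hxt : (x : Fin n) ≠ t := fun h => htX (by rwa [show x = tt from Subtype.ext h] at hx)
        have hc := cols_of_rank_le_one _ hXc
          (⟨tt, Finset.mem_compl.mpr htX⟩ : ((Xᶜ : Finset _) : Type))
          ⟨(⟨x, hx⟩ : (X : Finset _)), hoff _ t hxt⟩
        obtain ⟨a, ha⟩ := hc ⟨j, hjX⟩
        exact ⟨a, fun i hi => ha ⟨i, hi⟩⟩
      · intro i hi
        have hiX : i ∈ Xᶜ := Finset.mem_compl.mpr hi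
        obtain ⟨x, hx⟩ : ∃ x, x ∈ X := Finset.card_pos.mp (by omega)
        have hxt : (x : Fin n) ≠ t := fun h => htX (by rwa [show x = tt from Subtype.ext h] at hx)
        have hr := rows_of_rank_le_one _ hXr
          (⟨tt, Finset.mem_compl.mpr htX⟩ : ((Xᶜ : Finset _) : Type))
          ⟨(⟨x, hx⟩ : (X : Finset _)), hoff t _ (Ne.symm hxt)⟩
        obtain ⟨a, ha⟩ := hr ⟨i, hiX⟩
        exact ⟨a, fun j hj => ha ⟨j, hj⟩⟩
  -- build Y ⊂ S
  set Y : Finset (Fin n) := Z.image Subtype.val with hY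
  have hinj : Function.Injective (Subtype.val : ((T : Finset (Fin n)) : Type) → Fin n) :=
    Subtype.val_injective
  have hYcard : Y.card = Z.card := Finset.card_image_of_injective _ hinj
  have hYS : Y ⊆ S := by
    intro y hy
    obtain ⟨z, hz, rfl⟩ := Finset.mem_image.mp hy
    have hzT : z.val ∈ insert t S := hT ▸ z.property
    have hzt : z ≠ tt := fun e => hz1 (e ▸ hz)
    have hzt' : z.val ≠ t := fun h => hzt (Subtype.ext h)
    rcases Finset.mem_insert.mp hzT with h | h
    · exact absurd h hzt'
    · exact h
  have hYlt : Y.card < S.card := by omega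
  have hmemY : ∀ z : ((T : Finset (Fin n)) : Type), (z : Fin n) ∈ Y ↔ z ∈ Z := by
    intro z
    constructor
    · intro h
      obtain ⟨w, hw, hwz⟩ := Finset.mem_image.mp h
      rwa [hinj hwz] at hw
    · intro h; exact Finset.mem_image.mpr ⟨z, h, rfl⟩
  refine hmin Y (Finset.ssubset_iff_subset_ne.mpr ⟨hYS, fun h => by rw [h] at hYlt; omega⟩) ?_
  refine key A hoff S hS t ht Y hYS (by omega) hYlt ?_ ?_
  · intro j hjT hjY
    have hjT' : j ∈ T := hT ▸ hjT
    have hjZ : (⟨j, hjT'⟩ : ((T : Finset (Fin n)) : Type)) ∉ Z :=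
      fun h => hjY ((hmemY ⟨j, hjT'⟩).mpr h)
    obtain ⟨a, ha⟩ := hcolZ ⟨j, hjT'⟩ hjZ
    refine ⟨a, fun i hi => ?_⟩
    obtain ⟨z, hz, rfl⟩ := Finset.mem_image.mp hi
    exact ha z hz
  · intro i hiT hiY
    have hiT' : i ∈ T := hT ▸ hiT
    have hiZ : (⟨i, hiT'⟩ : ((T : Finset (Fin n)) : Type)) ∉ Z :=
      fun h => hiY ((hmemY ⟨i, hiT'⟩).mpr h)
    obtain ⟨a, ha⟩ := hrowZ ⟨i, hiT'⟩ hiZ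
    refine ⟨a, fun j hj => ?_⟩
    obtain ⟨z, hz, rfl⟩ := Finset.mem_image.mp hj
    exact ha z hz

theorem minimal_cut_extension_has_no_cut {n : ℕ} {F : Type*} [Field F]
    (A : Matrix (Fin n) (Fin n) F)
    (hoff : ∀ i j : Fin n, i ≠ j → A i j ≠ 0)
    (S : Finset (Fin n)) (hS : IsCut A S)
    (hmin : ∀ S' : Finset (Fin n), S' ⊂ S → ¬ IsCut A S')
    (hcard : 3 ≤ S.card) (t : Fin n) (ht : t ∉ S) :
    ∀ X : Finset ((insert t S : Finset (Fin n)) : Type),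
      ¬ IsCut (A.submatrix
          (fun i : (insert t S : Finset (Fin n)) => (i : Fin n))
          (fun i : (insert t S : Finset (Fin n)) => (i : Fin n))) X := by
  intro X hX
  exact main_aux A hoff S hS hmin hcard t ht (insert t S) rfl X hX
end

section
/- Let A be an n×n matrix over a field with all off-diagonal entries nonzero, let S ⊆ [n] be a cut of A, let t ∈ S, and suppose X ⊆ S̄ is a cut of the principal submatrix A[S̄ ∪ {t}]. Then X is also a cut of the full matrix A. -/
open Matrix

lemma minor_eq_of_rank_le_one {F : Type*} [Field F] {m k : Type*} [Fintype m] [Fintype k]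
    [DecidableEq k] (M : Matrix m k F) (h : M.rank ≤ 1) (i i' : m) (j j' : k) :
    M i j * M i' j' = M i' j * M i j' := by
  rw [Matrix.rank] at h
  obtain ⟨v, hv⟩ := finrank_le_one_iff.mp h
  have col : ∀ j : k, ∃ c : F, ∀ i, M i j = c * (v : m → F) i := by
    intro j
    have hmem : M *ᵥ (Pi.single j 1) ∈ LinearMap.range M.mulVecLin :=
      ⟨Pi.single j 1, rfl⟩
    obtain ⟨c, hc⟩ := hv ⟨_, hmem⟩
    refine ⟨c, fun i => ?_⟩
    have h2 := congrFun (congrArg Subtype.val hc) i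
    simpa using h2.symm
  obtain ⟨c, hc⟩ := col j
  obtain ⟨c', hc'⟩ := col j'
  rw [hc, hc, hc', hc']; ring

lemma rank_le_one_of_factor {F : Type*} [Field F] {m k : Type*} [Fintype m] [Fintype k]
    (M : Matrix m k F) (w : m → F) (c : k → F) (h : ∀ i j, M i j = w i * c j) :
    M.rank ≤ 1 := by
  have hM : M = Matrix.vecMulVec w c := by
    ext i j; simp [Matrix.vecMulVec_apply, h]
  rw [hM, Matrix.vecMulVec_eq Unit w c]
  exact (Matrix.rank_mul_le_left _ _).trans
    ((Matrix.rank_le_card_width _).trans (by simp))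

theorem cut_of_submatrix_is_cut {n : ℕ} {F : Type*} [Field F]
    (A : Matrix (Fin n) (Fin n) F)
    (hoff : ∀ i j : Fin n, i ≠ j → A i j ≠ 0)
    (S : Finset (Fin n)) (hS : IsCut A S) (t : Fin n) (ht : t ∈ S)
    (X : Finset (Fin n)) (hXsub : X ⊆ Sᶜ)
    (hX : IsCut (A.submatrix
        (fun i : (insert t Sᶜ : Finset (Fin n)) => (i : Fin n))
        (fun i : (insert t Sᶜ : Finset (Fin n)) => (i : Fin n)))
      ((insert t Sᶜ : Finset (Fin n)).attach.filter (fun i => (i : Fin n) ∈ X))) :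
    IsCut A X := by
  obtain ⟨hs0, hs0', hs1, hs2⟩ := hS
  obtain ⟨h1, h2, hr1, hr2⟩ := hX
  have htT : t ∈ (insert t Sᶜ : Finset (Fin n)) := Finset.mem_insert_self _ _
  have hXT : ∀ x ∈ X, x ∈ (insert t Sᶜ : Finset (Fin n)) :=
    fun x hx => Finset.mem_insert_of_mem (hXsub hx)
  have htX : t ∉ X := fun h => (Finset.mem_compl.mp (hXsub h)) ht
  have hcard : ((insert t Sᶜ : Finset (Fin n)).attach.filter
      (fun i : {x // x ∈ (insert t Sᶜ : Finset (Fin n))} => (i : Fin n) ∈ X)).card = X.card := by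
    refine Finset.card_bij (fun a _ => (a : Fin n)) ?_ ?_ ?_
    · intro a ha; exact (Finset.mem_filter.mp ha).2
    · intro a _ b _ h; exact Subtype.ext h
    · intro b hb
      exact ⟨⟨b, hXT b hb⟩, Finset.mem_filter.mpr ⟨Finset.mem_attach _ _, hb⟩, rfl⟩
  rw [hcard] at h1 h2
  have hcard2 : X.card + 2 ≤ Fintype.card (Fin n) := by
    refine h2.trans ?_
    rw [Fintype.card_coe]
    exact Finset.card_le_univ _
  obtain ⟨x₀, hx₀⟩ : X.Nonempty := Finset.card_pos.mp (by omega)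
  have hx₀t : x₀ ≠ t := fun h => htX (h ▸ hx₀)
  have hA0 : A x₀ t ≠ 0 := hoff _ _ hx₀t
  have hA0' : A t x₀ ≠ 0 := hoff _ _ (Ne.symm hx₀t)
  have fact1 : ∀ i ∈ X, ∀ j, j ∉ X → A i j * A x₀ t = A i t * A x₀ j := by
    intro i hi j hj
    by_cases hjS : j ∈ S
    · have h' : A i j * A x₀ t = A x₀ j * A i t :=
        minor_eq_of_rank_le_one _ hs2 ⟨i, hXsub hi⟩ ⟨x₀, hXsub hx₀⟩ ⟨j, hjS⟩ ⟨t, ht⟩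
      linear_combination h'
    · have hjT : j ∈ (insert t Sᶜ : Finset (Fin n)) :=
        Finset.mem_insert_of_mem (Finset.mem_compl.mpr hjS)
      have h' : A i j * A x₀ t = A x₀ j * A i t :=
        minor_eq_of_rank_le_one _ hr1
          ⟨⟨i, hXT i hi⟩, Finset.mem_filter.mpr ⟨Finset.mem_attach _ _, hi⟩⟩
          ⟨⟨x₀, hXT x₀ hx₀⟩, Finset.mem_filter.mpr ⟨Finset.mem_attach _ _, hx₀⟩⟩
          ⟨⟨j, hjT⟩, Finset.mem_compl.mpr (fun h => hj (Finset.mem_filter.mp h).2)⟩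
          ⟨⟨t, htT⟩, Finset.mem_compl.mpr (fun h => htX (Finset.mem_filter.mp h).2)⟩
      linear_combination h'
  have fact2 : ∀ i ∈ X, ∀ j, j ∉ X → A j i * A t x₀ = A t i * A j x₀ := by
    intro i hi j hj
    by_cases hjS : j ∈ S
    · have h' : A j i * A t x₀ = A t i * A j x₀ :=
        minor_eq_of_rank_le_one _ hs1 ⟨j, hjS⟩ ⟨t, ht⟩ ⟨i, hXsub hi⟩ ⟨x₀, hXsub hx₀⟩
      linear_combination h'
    · have hjT : j ∈ (insert t Sᶜ : Finset (Fin n)) :=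
        Finset.mem_insert_of_mem (Finset.mem_compl.mpr hjS)
      have h' : A j i * A t x₀ = A t i * A j x₀ :=
        minor_eq_of_rank_le_one _ hr2
          ⟨⟨j, hjT⟩, Finset.mem_compl.mpr (fun h => hj (Finset.mem_filter.mp h).2)⟩
          ⟨⟨t, htT⟩, Finset.mem_compl.mpr (fun h => htX (Finset.mem_filter.mp h).2)⟩
          ⟨⟨i, hXT i hi⟩, Finset.mem_filter.mpr ⟨Finset.mem_attach _ _, hi⟩⟩
          ⟨⟨x₀, hXT x₀ hx₀⟩, Finset.mem_filter.mpr ⟨Finset.mem_attach _ _, hx₀⟩⟩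
      linear_combination h'
  refine ⟨h1, hcard2, ?_, ?_⟩
  · apply rank_le_one_of_factor _ (fun i : X => A i t)
      (fun j : (Xᶜ : Finset (Fin n)) => A x₀ j / A x₀ t)
    rintro ⟨i, hi⟩ ⟨j, hj⟩
    have hj' : j ∉ X := Finset.mem_compl.mp hj
    show A i j = A i t * (A x₀ j / A x₀ t)
    field_simp
    linear_combination fact1 i hi j hj'
  · apply rank_le_one_of_factor _ (fun j : (Xᶜ : Finset (Fin n)) => A j x₀ / A t x₀)
      (fun i : X => A t i)
    rintro ⟨j, hj⟩ ⟨i, hi⟩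
    have hj' : j ∉ X := Finset.mem_compl.mp hj
    show A j i = A j x₀ / A t x₀ * A t i
    field_simp
    linear_combination fact2 i hi j hj'
end

section
/- For an n×n matrix A over a field F, the function g₁ : 2^[n] → ℤ defined by g₁(X) = rank(A[X, X̄]) (the rank of the submatrix with rows indexed by X and columns by the complement of X) is submodular: for all X, Y ⊆ [n], g₁(X ∪ Y) + g₁(X ∩ Y) ≤ g₁(X) + g₁(Y). -/
/-!
Let `V i` be the span of the `i`-th row of `A` and the `i`-th standard basis vector. Restricting
vectors to the coordinates in `X̄` kills exactly the span of the basis vectors indexed by `X` and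
sends the rows indexed by `X` to the rows of `A[X, X̄]`; hence `dim (⨆ i ∈ X, V i)` equals
`rank A[X, X̄] + |X|`. The dimension of a join of subspaces is submodular in the index set (by the
modular law `dim (U ⊔ W) + dim (U ⊓ W) = dim U + dim W`) and `|X|` is modular, so their
difference `rank A[X, X̄]` is submodular.
-/

open Matrix

/-- The rank of the off-diagonal block `A[X, X̄]`. -/
noncomputable def offDiagRank {n : ℕ} {F : Type*} [Field F]
    (A : Matrix (Fin n) (Fin n) F) (X : Finset (Fin n)) : ℕ :=
  (A.submatrix (fun i : X => (i : Fin n)) (fun j : (Xᶜ : Finset (Fin n)) => (j : Fin n))).rank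

open Module

namespace Submodule

variable {K M ι : Type*} [DivisionRing K] [AddCommGroup M] [Module K M] [FiniteDimensional K M]

theorem finrank_sup_ker {W : Type*} [AddCommGroup W] [Module K W] (f : M →ₗ[K] W)
    (p : Submodule K M) :
    finrank K ↥(p ⊔ LinearMap.ker f) = finrank K (p.map f) + finrank K (LinearMap.ker f) := by
  have hrange : LinearMap.range (f.domRestrict (p ⊔ LinearMap.ker f)) = p.map f := by
    rw [LinearMap.range_domRestrict, map_sup, LinearMap.le_ker_iff_map.mp le_rfl, sup_bot_eq]
  have hker : LinearMap.ker (f.domRestrict (p ⊔ LinearMap.ker f)) ≃ₗ[K] LinearMap.ker f := by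
    rw [LinearMap.ker_domRestrict]
    exact comapSubtypeEquivOfLe le_sup_right
  rw [← hrange, ← hker.finrank_eq, LinearMap.finrank_range_add_finrank_ker]

theorem finrank_biSup_union_add_finrank_biSup_inter_le [DecidableEq ι] (V : ι → Submodule K M)
    (s t : Finset ι) :
    finrank K ↥(⨆ i ∈ s ∪ t, V i) + finrank K ↥(⨆ i ∈ s ∩ t, V i) ≤
      finrank K ↥(⨆ i ∈ s, V i) + finrank K ↥(⨆ i ∈ t, V i) := by
  have hinter : ⨆ i ∈ s ∩ t, V i ≤ (⨆ i ∈ s, V i) ⊓ ⨆ i ∈ t, V i :=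
    le_inf (biSup_mono fun _ hi => (Finset.mem_inter.mp hi).1)
      (biSup_mono fun _ hi => (Finset.mem_inter.mp hi).2)
  rw [Finset.iSup_union, ← finrank_sup_add_finrank_inf_eq (⨆ i ∈ s, V i)]
  exact Nat.add_le_add_left (finrank_mono hinter) _

end Submodule

namespace LinearMap

theorem ker_funLeft_val_compl {R ι : Type*} [Semiring R] [Fintype ι] [DecidableEq ι]
    (X : Finset ι) :
    ker (funLeft R R (Subtype.val : (Xᶜ : Finset ι) → ι)) =
      ⨆ i ∈ X, range (single R (fun _ : ι => R) i) := by
  calc ker (funLeft R R (Subtype.val : (Xᶜ : Finset ι) → ι))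
        = ⨅ i ∈ (X : Set ι)ᶜ, ker (proj i) := by
          ext v
          simp [funext_iff]
    _ = ⨆ i ∈ X, range (single R (fun _ : ι => R) i) :=
          (iSup_range_single_eq_iInf_ker_proj R _ isCompl_compl X.finite_toSet).symm

theorem finrank_ker_funLeft_val_compl {K ι : Type*} [DivisionRing K] [Fintype ι] [DecidableEq ι]
    (X : Finset ι) :
    finrank K (ker (funLeft K K (Subtype.val : (Xᶜ : Finset ι) → ι))) = X.card := by
  have h := finrank_range_add_finrank_ker (funLeft K K (Subtype.val : (Xᶜ : Finset ι) → ι))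
  rw [range_eq_top.mpr (funLeft_surjective_of_injective _ _ _ Subtype.val_injective),
    finrank_top, finrank_fintype_fun_eq_card, finrank_fintype_fun_eq_card, Fintype.card_coe,
    Finset.card_compl] at h
  have := X.card_le_univ
  omega

end LinearMap

namespace Matrix

variable {F ι : Type*} [Field F] [Fintype ι] [DecidableEq ι]

theorem map_funLeft_val_compl_biSup_span_row (A : Matrix ι ι F) (X : Finset ι) :
    (⨆ i ∈ X, Submodule.span F {A i}).map
        (LinearMap.funLeft F F (Subtype.val : (Xᶜ : Finset ι) → ι)) =
      Submodule.span F (Set.range (A.submatrix (fun i : X => (i : ι))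
        (fun j : (Xᶜ : Finset ι) => (j : ι))).row) := by
  rw [iSup_subtype', ← Submodule.span_range_eq_iSup, Submodule.map_span, ← Set.range_comp]
  rfl

noncomputable def rowStdSpan (A : Matrix ι ι F) (i : ι) : Submodule F (ι → F) :=
  Submodule.span F {A i} ⊔ LinearMap.range (LinearMap.single F (fun _ : ι => F) i)

theorem finrank_biSup_rowStdSpan (A : Matrix ι ι F) (X : Finset ι) :
    finrank F ↥(⨆ i ∈ X, A.rowStdSpan i) =
      (A.submatrix (fun i : X => (i : ι)) (fun j : (Xᶜ : Finset ι) => (j : ι))).rank +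
        X.card := by
  have hsplit : ⨆ i ∈ X, A.rowStdSpan i = (⨆ i ∈ X, Submodule.span F {A i}) ⊔
      LinearMap.ker (LinearMap.funLeft F F (Subtype.val : (Xᶜ : Finset ι) → ι)) := by
    simp only [rowStdSpan, LinearMap.ker_funLeft_val_compl, iSup_sup_eq]
  rw [hsplit, Submodule.finrank_sup_ker, map_funLeft_val_compl_biSup_span_row,
    LinearMap.finrank_ker_funLeft_val_compl, rank_eq_finrank_span_row]

end Matrix

/-- The function `X ↦ rank A[X, X̄]` is submodular. -/
theorem offDiagRank_submodular {n : ℕ} {F : Type*} [Field F]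
    (A : Matrix (Fin n) (Fin n) F) (X Y : Finset (Fin n)) :
    offDiagRank A (X ∪ Y) + offDiagRank A (X ∩ Y) ≤ offDiagRank A X + offDiagRank A Y := by
  have hdim := Submodule.finrank_biSup_union_add_finrank_biSup_inter_le A.rowStdSpan X Y
  simp only [finrank_biSup_rowStdSpan] at hdim
  have hcard := Finset.card_union_add_card_inter X Y
  unfold offDiagRank
  omega
end

section
/- Let A be an n×n matrix over a field F, and let D be an n×n diagonal matrix such that A + D is non-singular. Then A and adj(A+D) have the same set of cuts: for every X ⊂ [n] with 2 ≤ |X| ≤ n−2, X is a cut of A if and only if X is a cut of adj(A+D). -/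
open Matrix

open Module Submodule LinearMap Function

section Aux

variable {F : Type*} [Field F]

/-- Rank–nullity for the restriction of a linear map to a submodule. -/
lemma aux_finrank_map_add {V W : Type*} [AddCommGroup V] [Module F V] [AddCommGroup W]
    [Module F W] [FiniteDimensional F V] (U : Submodule F V) (φ : V →ₗ[F] W) :
    finrank F (U.map φ) + finrank F ↥(U ⊓ LinearMap.ker φ) = finrank F U := by
  have h := LinearMap.finrank_range_add_finrank_ker (φ.domRestrict U)
  rw [LinearMap.range_domRestrict, LinearMap.ker_domRestrict] at h
  rw [← h]
  congr 1
  rw [← Submodule.finrank_map_subtype_eq U ((LinearMap.ker φ).comap U.subtype),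
    Submodule.map_comap_subtype]

lemma aux_injective_mulVecLin {n : ℕ} (N : Matrix (Fin n) (Fin n) F) (h : IsUnit N.det) :
    Function.Injective ⇑N.mulVecLin := by
  have hcomp : N⁻¹.mulVecLin ∘ₗ N.mulVecLin = LinearMap.id := by
    rw [← Matrix.mulVecLin_mul, Matrix.nonsing_inv_mul N h, Matrix.mulVecLin_one]
  have : ∀ v, N⁻¹.mulVecLin (N.mulVecLin v) = v := fun v => by
    rw [← LinearMap.comp_apply, hcomp]; rfl
  exact Function.LeftInverse.injective this

/-- The "nullity theorem" for off-diagonal blocks: the block of the adjugate of a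
nonsingular matrix on complementary index sets has the same rank as the corresponding
block of the matrix itself. -/
lemma rank_adjugate_submatrix {n : ℕ} {α β : Type*} [Fintype α] [Fintype β]
    [DecidableEq α] [DecidableEq β]
    (M : Matrix (Fin n) (Fin n) F) (h : IsUnit M.det)
    (f : α → Fin n) (g : β → Fin n)
    (hfg : ∀ j : Fin n, (∃ a, f a = j) ↔ ¬ (∃ b, g b = j))
    (hg : Function.Injective g) :
    (M.adjugate.submatrix f g).rank = (M.submatrix f g).rank := by
  classical
  set P : Matrix α (Fin n) F := (1 : Matrix (Fin n) (Fin n) F).submatrix f (fun j => j) with hP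
  set Q : Matrix (Fin n) β F := (1 : Matrix (Fin n) (Fin n) F).submatrix (fun j => j) g with hQ
  have hPv : ∀ (v : Fin n → F) (a : α), P.mulVecLin v a = v (f a) := by
    intro v a
    simp [hP, Matrix.mulVecLin_apply, Matrix.mulVec, dotProduct, Matrix.one_apply,
      Finset.sum_ite_eq]
  have hPAQ : ∀ A : Matrix (Fin n) (Fin n) F, A.submatrix f g = P * A * Q := by
    intro A; ext a b
    simp [hP, hQ, Matrix.mul_apply, Matrix.one_apply, Finset.sum_ite_eq, Finset.sum_ite_eq']
  set W := LinearMap.range Q.mulVecLin with hW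
  -- membership in `W` is vanishing on the range of `f`
  have hWmem : ∀ v : Fin n → F, v ∈ W ↔ ∀ a, v (f a) = 0 := by
    intro v
    constructor
    · rintro ⟨w, rfl⟩ a
      have hfa : ¬ ∃ b, g b = f a := (hfg (f a)).mp ⟨a, rfl⟩
      simp only [Matrix.mulVecLin_apply, Matrix.mulVec, dotProduct, hQ,
        Matrix.submatrix_apply, id_eq, Matrix.one_apply]
      refine Finset.sum_eq_zero fun b _ => ?_
      have : f a ≠ g b := fun hc => hfa ⟨b, hc.symm⟩
      simp [this]
    · intro hv
      refine ⟨fun b => v (g b), ?_⟩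
      funext j
      simp only [Matrix.mulVecLin_apply, Matrix.mulVec, dotProduct, hQ,
        Matrix.submatrix_apply, id_eq, Matrix.one_apply]
      by_cases hj : ∃ b, g b = j
      · obtain ⟨b, rfl⟩ := hj
        rw [Finset.sum_eq_single b]
        · simp
        · intro b' _ hb'
          have : g b ≠ g b' := fun hc => hb' (hg hc).symm
          simp [this]
        · simp
      · obtain ⟨a, rfl⟩ := (hfg j).mpr hj
        rw [hv a]
        refine Finset.sum_eq_zero fun b _ => ?_
        have : f a ≠ g b := fun hc => hj ⟨b, hc.symm⟩
        simp [this]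
  have hkerP : LinearMap.ker P.mulVecLin = W := by
    ext v
    rw [LinearMap.mem_ker, hWmem]
    constructor
    · intro hv a
      rw [← hPv v a, hv]; rfl
    · intro hv
      funext a
      rw [hPv v a, hv a]
      simp
  -- injectivity facts
  have hdetadj : IsUnit M.adjugate.det := by
    rw [Matrix.det_adjugate]; exact h.pow _
  have hinjM : Function.Injective ⇑M.mulVecLin := aux_injective_mulVecLin M h
  have hinjA : Function.Injective ⇑M.adjugate.mulVecLin := aux_injective_mulVecLin _ hdetadj
  have hdet0 : M.det ≠ 0 := h.ne_zero
  -- the image of W under M ∘ adj M is W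
  have hMadj : (W.map M.adjugate.mulVecLin).map M.mulVecLin = W := by
    rw [← Submodule.map_comp, ← Matrix.mulVecLin_mul, Matrix.mul_adjugate]
    have hsmul : ∀ v : Fin n → F, (M.det • (1 : Matrix (Fin n) (Fin n) F)).mulVecLin v
        = M.det • v := by
      intro v
      rw [Matrix.mulVecLin_apply, Matrix.smul_mulVec, Matrix.one_mulVec]
    apply le_antisymm
    · rintro _ ⟨w, hw, rfl⟩
      rw [hsmul]
      exact Submodule.smul_mem W _ hw
    · intro v hv
      refine ⟨M.det⁻¹ • v, Submodule.smul_mem W _ hv, ?_⟩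
      rw [hsmul, smul_smul, mul_inv_cancel₀ hdet0, one_smul]
  -- rank as a dimension of a mapped subspace
  have hrank : ∀ A : Matrix (Fin n) (Fin n) F,
      (A.submatrix f g).rank = finrank F ((W.map A.mulVecLin).map P.mulVecLin) := by
    intro A
    rw [hPAQ A, Matrix.rank, Matrix.mulVecLin_mul, Matrix.mulVecLin_mul,
      LinearMap.range_comp, ← hW, Submodule.map_comp]
  set U₁ := W.map M.adjugate.mulVecLin with hU₁
  set U₂ := W.map M.mulVecLin with hU₂
  have e1 := aux_finrank_map_add U₁ P.mulVecLin
  have e2 := aux_finrank_map_add U₂ P.mulVecLin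
  rw [hkerP] at e1 e2
  have r1 : finrank F ↥U₁ = finrank F ↥W :=
    (Submodule.equivMapOfInjective _ hinjA W).symm.finrank_eq
  have r2 : finrank F ↥U₂ = finrank F ↥W :=
    (Submodule.equivMapOfInjective _ hinjM W).symm.finrank_eq
  have r3 : finrank F ↥(U₁ ⊓ W) = finrank F ↥(U₂ ⊓ W) := by
    have hmap : (U₁ ⊓ W).map M.mulVecLin = W ⊓ U₂ := by
      rw [Submodule.map_inf _ hinjM, hMadj]
    calc finrank F ↥(U₁ ⊓ W)
        = finrank F ↥((U₁ ⊓ W).map M.mulVecLin) :=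
          ((Submodule.equivMapOfInjective _ hinjM _).symm.finrank_eq).symm
      _ = finrank F ↥(W ⊓ U₂) := by rw [hmap]
      _ = finrank F ↥(U₂ ⊓ W) := by rw [inf_comm]
  rw [hrank, hrank, ← hU₁, ← hU₂]
  omega

end Aux

theorem same_cuts_of_adjugate_shift {n : ℕ} {F : Type*} [Field F]
    (A : Matrix (Fin n) (Fin n) F) (d : Fin n → F)
    (h : IsUnit (A + Matrix.diagonal d).det) :
    ∀ X : Finset (Fin n), 2 ≤ X.card → X.card + 2 ≤ n →
      (IsCut A X ↔ IsCut (A + Matrix.diagonal d).adjugate X) := by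
  intro X hX2 hXn
  set M := A + Matrix.diagonal d with hM
  -- off-diagonal blocks of A and M coincide
  have hsub1 : A.submatrix (fun i : X => (i : Fin n)) (fun j : (Xᶜ : Finset (Fin n)) => (j : Fin n))
      = M.submatrix (fun i : X => (i : Fin n)) (fun j : (Xᶜ : Finset (Fin n)) => (j : Fin n)) := by
    ext i j
    have hne : (i : Fin n) ≠ (j : Fin n) := by
      intro hc
      have := j.2
      rw [Finset.mem_compl, ← hc] at this
      exact this i.2
    simp [hM, Matrix.diagonal_apply_ne _ hne]
  have hsub2 : A.submatrix (fun i : (Xᶜ : Finset (Fin n)) => (i : Fin n)) (fun j : X => (j : Fin n))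
      = M.submatrix (fun i : (Xᶜ : Finset (Fin n)) => (i : Fin n)) (fun j : X => (j : Fin n)) := by
    ext i j
    have hne : (i : Fin n) ≠ (j : Fin n) := by
      intro hc
      have := i.2
      rw [Finset.mem_compl, hc] at this
      exact this j.2
    simp [hM, Matrix.diagonal_apply_ne _ hne]
  have key1 := rank_adjugate_submatrix M h
      (fun i : X => (i : Fin n)) (fun j : (Xᶜ : Finset (Fin n)) => (j : Fin n))
      (by intro j; simp [Finset.mem_compl])
      (fun a b hab => Subtype.ext hab)
  have key2 := rank_adjugate_submatrix M h
      (fun i : (Xᶜ : Finset (Fin n)) => (i : Fin n)) (fun j : X => (j : Fin n))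
      (by intro j; simp [Finset.mem_compl])
      (fun a b hab => Subtype.ext hab)
  unfold IsCut
  rw [key1, key2, hsub1, hsub2]
end
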